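/- Let I ∈ ℍ be a quaternion with I² = −1 and let ℂ_I := ℝ + ℝI ⊆ ℍ be the associated slice complex plane. Let f, g : ℝ → ℍ be continuously differentiable 2π-periodic functions with g taking values in ℂ_I. Then for every n ∈ ℤ, the right Fourier coefficients satisfy F_{R,I}(fg)(n) = Σ_{m∈ℤ} F_{R,I}(f)(m) · F_{R,I}(g)(n − m), the series converging absolutely in ℍ. -/

import Mathlib

open Filter

noncomputable section

local notation "ℍ" => Quaternion ℝ

/-- `e^{Iθ} = cos θ + I sin θ` in the quaternions. -/
def expI (I : ℍ) (θ : ℝ) : ℍ :=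
  ((Real.cos θ : ℝ) : ℍ) + Real.sin θ • I

/-- The `n`-th right Fourier coefficient
`F_{R,I}(h)(n) = (1/(2π)) ∫_{−π}^{π} h(θ) e^{−Inθ} dθ` of a quaternion-valued function. -/
def fourierR (I : ℍ) (h : ℝ → ℍ) (n : ℤ) : ℍ :=
  (1 / (2 * Real.pi)) • ∫ θ in (-Real.pi)..Real.pi, h θ * expI I (-(n : ℝ) * θ)

/-! Since `g` takes values in the slice `ℂ_I`, a commutative subfield isometric to `ℂ`, it is the
image of a `C¹` periodic complex function `G`. The Fourier coefficients of `G` are those of `G'`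
divided by `ik`, and `G'` is square integrable, so they are absolutely summable and the Fourier
series of `G` converges pointwise. Transported to `ℂ_I` this reads
`g θ = Σ_k F_{R,I}(g)(k) e^{Ikθ}`. Multiplying by `f θ` on the left and by `e^{-Inθ}` (which
commutes with `ℂ_I`) on the right, and integrating term by term, which is legitimate since the
terms are dominated by `‖f θ‖ ‖F_{R,I}(g)(k)‖`, gives the convolution formula. -/

open MeasureTheory Real

lemma Quaternion.normSq_eq_one_of_mul_self_eq_neg_one {I : ℍ} (hI : I * I = -1) :
    normSq I = 1 := by
  have h : normSq I * normSq I = 1 := by rw [← map_mul, hI, normSq_neg, map_one]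
  nlinarith [normSq_nonneg (a := I)]

lemma Quaternion.re_eq_zero_of_mul_self_eq_neg_one {I : ℍ} (hI : I * I = -1) : I.re = 0 := by
  rw [← sq_eq_neg_normSq, sq, hI, normSq_eq_one_of_mul_self_eq_neg_one hI, coe_one]

lemma Quaternion.norm_liftAux {I : ℍ} (hI : I * I = -1) (z : ℂ) :
    ‖Complex.liftAux I hI z‖ = ‖z‖ := by
  have hre := re_eq_zero_of_mul_self_eq_neg_one hI
  have hn := normSq_eq_one_of_mul_self_eq_neg_one hI
  rw [normSq_def', hre] at hn
  have hnormSq : normSq (Complex.liftAux I hI z) = Complex.normSq z := by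
    simp only [Complex.liftAux_apply, algebraMap_def, normSq_def', re_add, re_coe, re_smul, hre,
      smul_eq_mul, mul_zero, add_zero, imI_add, imI_coe, imI_smul, zero_add, imJ_add, imJ_coe,
      imJ_smul, imK_add, imK_coe, imK_smul, Complex.normSq_apply]
    linear_combination z.im ^ 2 * hn
  rw [← sq_eq_sq₀ (norm_nonneg _) (norm_nonneg _), sq, ← normSq_eq_norm_mul_self, hnormSq,
    Complex.sq_norm]

lemma Function.Periodic.deriv {𝕜 F : Type*} [NontriviallyNormedField 𝕜] [NormedAddCommGroup F]
    [NormedSpace 𝕜 F] {f : 𝕜 → F} {c : 𝕜} (h : Function.Periodic f c) :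
    Function.Periodic (deriv f) c := fun x ↦ by
  rw [← deriv_comp_add_const, funext h]

section FourierSeries

variable {a b : ℝ} {u : ℝ → ℂ}

lemma fourierCoeffOn_of_hasDerivAt_of_eq (hab : a < b) {u' : ℝ → ℂ} {k : ℤ} (hk : k ≠ 0)
    (hu : ∀ x ∈ Set.uIcc a b, HasDerivAt u (u' x) x) (hu' : IntervalIntegrable u' volume a b)
    (hba : u b = u a) :
    fourierCoeffOn hab u k = (b - a) / (2 * π * Complex.I * k) * fourierCoeffOn hab u' k := by
  have : (k : ℂ) ≠ 0 := by exact_mod_cast hk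
  rw [fourierCoeffOn_of_hasDerivAt hab hk hu hu', hba, sub_self, mul_zero, zero_sub]
  field_simp

lemma fourierCoeff_lift_eq_fourierCoeffOn (hab : a < b) [Fact (0 < b - a)]
    (hper : Function.Periodic u (b - a)) (k : ℤ) :
    fourierCoeff hper.lift k = fourierCoeffOn hab u k := by
  rw [fourierCoeff_eq_intervalIntegral _ k a, fourierCoeffOn_eq_integral, add_sub_cancel]
  simp only [Function.Periodic.lift_coe]

lemma summable_sq_norm_fourierCoeffOn (hab : a < b) (hu : Continuous u)
    (hper : Function.Periodic u (b - a)) :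
    Summable fun k ↦ ‖fourierCoeffOn hab u k‖ ^ 2 := by
  have := Fact.mk (sub_pos.2 hab)
  let U : C(AddCircle (b - a), ℂ) := ⟨hper.lift, continuous_coinduced_dom.mpr hu⟩
  refine (hasSum_sq_fourierCoeff (U.toLp 2 AddCircle.haarAddCircle ℂ)).summable.congr fun k ↦ ?_
  rw [fourierCoeff_toLp, ← fourierCoeff_lift_eq_fourierCoeffOn hab hper]
  rfl

lemma summable_norm_fourierCoeffOn (hab : a < b) (hu : ContDiff ℝ 1 u)
    (hper : Function.Periodic u (b - a)) :
    Summable fun k ↦ ‖fourierCoeffOn hab u k‖ := by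
  have hu' : Continuous (deriv u) := hu.continuous_deriv le_rfl
  have hsq := summable_sq_norm_fourierCoeffOn hab hu' hper.deriv
  refine Summable.of_norm_bounded_eventually (((hsq.add (summable_one_div_int_pow.mpr
    one_lt_two)).div_const 2).mul_left ((b - a) / (2 * π))) ?_
  filter_upwards [eventually_cofinite_ne 0] with k hk
  have hba : u b = u a := by simpa using hper a
  rw [norm_norm, fourierCoeffOn_of_hasDerivAt_of_eq hab hk
    (fun x _ ↦ (hu.differentiable one_ne_zero x).hasDerivAt) (hu'.intervalIntegrable _ _) hba]
  have hk' : (0 : ℝ) < |(k : ℝ)| := by positivity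
  have hnorm : ‖(b - a) / (2 * π * Complex.I * k)‖ = (b - a) / (2 * π) * (1 / |(k : ℝ)|) := by
    simp only [← Complex.ofReal_sub, Complex.norm_div, Complex.norm_real, norm_eq_abs,
      abs_of_pos (sub_pos.2 hab), Complex.norm_mul, Complex.norm_ofNat, abs_of_pos pi_pos,
      Complex.norm_I, mul_one, Complex.norm_intCast, one_div]
    field_simp
  rw [norm_mul, hnorm, mul_assoc]
  refine mul_le_mul_of_nonneg_left ?_ (div_nonneg (sub_pos.2 hab).le two_pi_pos.le)
  have hamgm := two_mul_le_add_sq (1 / |(k : ℝ)|) ‖fourierCoeffOn hab (deriv u) k‖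
  rw [div_pow, one_pow, sq_abs] at hamgm
  linarith

lemma hasSum_fourierCoeffOn_mul_fourier (hab : a < b) (hu : ContDiff ℝ 1 u)
    (hper : Function.Periodic u (b - a)) (x : ℝ) :
    HasSum (fun k ↦ fourierCoeffOn hab u k * fourier k (x : AddCircle (b - a))) (u x) := by
  have := Fact.mk (sub_pos.2 hab)
  let U : C(AddCircle (b - a), ℂ) := ⟨hper.lift, continuous_coinduced_dom.mpr hu.continuous⟩
  have hcoeff := fourierCoeff_lift_eq_fourierCoeffOn hab hper
  have hU := has_pointwise_sum_fourier_series_of_summable (f := U) ?_ x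
  · simpa [U, hcoeff] using hU
  · exact .of_norm <| by simpa [U, hcoeff] using summable_norm_fourierCoeffOn hab hu hper

end FourierSeries

section Slice

variable {I : ℍ} (hI : I * I = -1)

/-- `z ↦ Re z + (Im z) I`, identifying `ℂ` with the slice `ℂ_I`. -/
def sliceEmbedding : ℂ →ₗᵢ[ℝ] ℍ :=
  { (Complex.liftAux I hI).toLinearMap with norm_map' := Quaternion.norm_liftAux hI }

lemma sliceEmbedding_apply (z : ℂ) : sliceEmbedding hI z = Complex.liftAux I hI z := rfl

lemma sliceEmbedding_mul (z w : ℂ) :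
    sliceEmbedding hI (z * w) = sliceEmbedding hI z * sliceEmbedding hI w :=
  map_mul (Complex.liftAux I hI) z w

lemma expI_eq_sliceEmbedding (t : ℝ) :
    expI I t = sliceEmbedding hI (Complex.exp (t * Complex.I)) := by
  simp [expI, sliceEmbedding_apply, Complex.liftAux_apply, Complex.exp_ofReal_mul_I_re,
    Complex.exp_ofReal_mul_I_im]

lemma sliceEmbedding_fourier_coe (k : ℤ) (x : ℝ) :
    sliceEmbedding hI (fourier k (x : AddCircle (π - -π))) = expI I (k * x) := by
  rw [fourier_coe_apply, expI_eq_sliceEmbedding hI]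
  congr 2
  push_cast
  field_simp
  ring

lemma fourierR_sliceEmbedding_comp (G : ℝ → ℂ) (k : ℤ) :
    fourierR I (fun θ ↦ sliceEmbedding hI (G θ)) k =
      sliceEmbedding hI (fourierCoeffOn (neg_lt_self pi_pos) G k) := by
  rw [fourierCoeffOn_eq_integral, LinearIsometry.map_smul,
    ← LinearIsometry.intervalIntegral_comp_comm, fourierR]
  congr 1
  · ring
  · refine intervalIntegral.integral_congr fun θ _ ↦ ?_
    rw [smul_eq_mul, mul_comm (fourier _ _), sliceEmbedding_mul, sliceEmbedding_fourier_coe,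
      Int.cast_neg]

lemma exists_sliceEmbedding_comp_eq {g : ℝ → ℍ} {k : WithTop ℕ∞} (hg : ContDiff ℝ k g) {T : ℝ}
    (hgp : Function.Periodic g T) (hgI : ∀ θ : ℝ, ∃ a b : ℝ, g θ = ((a : ℝ) : ℍ) + b • I) :
    ∃ G : ℝ → ℂ, ContDiff ℝ k G ∧ Function.Periodic G T ∧ ∀ θ, sliceEmbedding hI (G θ) = g θ := by
  obtain ⟨ψ, hψ⟩ := ContinuousLinearMap.HasLeftInverse.of_injective_of_finiteDimensional
    (f := (sliceEmbedding hI).toContinuousLinearMap) (sliceEmbedding hI).injective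
  refine ⟨fun θ ↦ ψ (g θ), ψ.contDiff.comp hg, hgp.comp ψ, fun θ ↦ ?_⟩
  obtain ⟨a, b, hab⟩ := hgI θ
  have hslice : g θ = sliceEmbedding hI ⟨a, b⟩ := hab
  show sliceEmbedding hI (ψ (g θ)) = g θ
  rw [hslice]
  exact congrArg (sliceEmbedding hI) (hψ _)

lemma mul_sliceEmbedding_mul_expI_mul_expI (q : ℍ) (z : ℂ) (k n : ℤ) (θ : ℝ) :
    q * (sliceEmbedding hI z * expI I (k * θ)) * expI I (-n * θ) =
      q * expI I (-(n - k : ℤ) * θ) * sliceEmbedding hI z := by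
  simp only [expI_eq_sliceEmbedding hI, mul_assoc, ← sliceEmbedding_mul]
  rw [← Complex.exp_add, mul_comm z]
  push_cast
  ring_nf

end Slice

lemma norm_expI {I : ℍ} (hI : I * I = -1) (t : ℝ) : ‖expI I t‖ = 1 := by
  rw [expI_eq_sliceEmbedding hI, LinearIsometry.norm_map, Complex.norm_exp_ofReal_mul_I]

lemma continuous_expI (I : ℍ) : Continuous (expI I) :=
  (Quaternion.continuous_coe.comp continuous_cos).add (continuous_sin.smul continuous_const)

lemma intervalIntegral.integral_mul_const_of_intervalIntegrable {A : Type*} [NormedRing A]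
    [NormedAlgebra ℝ A] [CompleteSpace A] {f : ℝ → A} {a b : ℝ}
    (hf : IntervalIntegrable f volume a b) (c : A) :
    ∫ x in a..b, f x * c = (∫ x in a..b, f x) * c :=
  ((ContinuousLinearMap.mul ℝ A).flip c).intervalIntegral_comp_comm hf

lemma norm_fourierR_le {I : ℍ} (hI : I * I = -1) (f : ℝ → ℍ) (n : ℤ) :
    ‖fourierR I f n‖ ≤ 1 / (2 * π) * ∫ θ in -π..π, ‖f θ‖ := by
  rw [fourierR, norm_smul, Real.norm_of_nonneg (by positivity)]
  gcongr
  refine (intervalIntegral.norm_integral_le_integral_norm (neg_le_self pi_pos.le)).trans_eq ?_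
  simp only [norm_mul, norm_expI hI, mul_one]

lemma hasSum_fourierR_mul_of_hasSum {I : ℍ} (hI : I * I = -1) {f g : ℝ → ℍ} (hf : Continuous f)
    {γ : ℤ → ℂ} (hγ : Summable fun k ↦ ‖γ k‖)
    (hg : ∀ θ, HasSum (fun k ↦ sliceEmbedding hI (γ k) * expI I (k * θ)) (g θ)) (n : ℤ) :
    HasSum (fun m ↦ fourierR I f m * sliceEmbedding hI (γ (n - m)))
      (fourierR I (fun θ ↦ f θ * g θ) n) := by
  have hcont (k : ℤ) : Continuous fun θ ↦ f θ * expI I (-(n - k : ℤ) * θ) :=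
    hf.mul ((continuous_expI I).comp (continuous_const.mul continuous_id))
  have hint := intervalIntegral.hasSum_integral_of_dominated_convergence
    (F := fun k θ ↦ f θ * expI I (-(n - k : ℤ) * θ) * sliceEmbedding hI (γ k))
    (f := fun θ ↦ f θ * g θ * expI I (-n * θ)) (a := -π) (b := π) (μ := volume)
    (fun k θ ↦ ‖f θ‖ * ‖γ k‖)
    (fun k ↦ ((hcont k).mul continuous_const).aestronglyMeasurable)
    (fun k ↦ .of_forall fun θ _ ↦ by
      rw [norm_mul, norm_mul, norm_expI hI, mul_one, LinearIsometry.norm_map])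
    (.of_forall fun θ _ ↦ hγ.mul_left _)
    (by simpa only [tsum_mul_left] using
      (by fun_prop : Continuous fun θ ↦ ‖f θ‖ * ∑' k, ‖γ k‖).intervalIntegrable _ _)
    (.of_forall fun θ _ ↦ by
      simpa only [mul_sliceEmbedding_mul_expI_mul_expI hI] using
        ((hg θ).mul_left (f θ)).mul_right (expI I (-n * θ)))
  have hterm (k : ℤ) : (1 / (2 * π)) •
      ∫ θ in -π..π, f θ * expI I (-(n - k : ℤ) * θ) * sliceEmbedding hI (γ k) =
        fourierR I f (n - k) * sliceEmbedding hI (γ k) := by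
    rw [intervalIntegral.integral_mul_const_of_intervalIntegrable
      ((hcont k).intervalIntegrable _ _), ← smul_mul_assoc, fourierR]
  refine (Equiv.subLeft n).hasSum_iff.mp ?_
  rw [fourierR]
  simpa only [Function.comp_def, Equiv.subLeft_apply, sub_sub_cancel, hterm] using
    hint.const_smul (1 / (2 * π))

theorem fourierR_mul_general (I : ℍ) (hI : I ^ 2 = -1)
    (f g : ℝ → ℍ) (hf : ContDiff ℝ 1 f) (hg : ContDiff ℝ 1 g)
    (hgp : Function.Periodic g (2 * Real.pi))
    (hgI : ∀ θ : ℝ, ∃ a b : ℝ, g θ = ((a : ℝ) : ℍ) + b • I) (n : ℤ) :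
    Summable (fun m : ℤ => ‖fourierR I f m * fourierR I g (n - m)‖) ∧
    fourierR I (fun θ => f θ * g θ) n = ∑' m : ℤ, fourierR I f m * fourierR I g (n - m) := by
  have hI' : I * I = -1 := by rwa [← sq]
  have hpi : -π < π := neg_lt_self pi_pos
  obtain ⟨G, hG, hGper, hgG⟩ := exists_sliceEmbedding_comp_eq hI' hg
    (by rwa [sub_neg_eq_add, ← two_mul] : Function.Periodic g (π - -π)) hgI
  have hcoeff (k : ℤ) : fourierR I g k = sliceEmbedding hI' (fourierCoeffOn hpi G k) := by
    simpa only [hgG] using fourierR_sliceEmbedding_comp hI' G k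
  have hseries (θ : ℝ) :
      HasSum (fun k ↦ sliceEmbedding hI' (fourierCoeffOn hpi G k) * expI I (k * θ)) (g θ) := by
    simpa only [LinearIsometry.coe_toContinuousLinearMap, hgG, sliceEmbedding_mul,
      sliceEmbedding_fourier_coe] using (sliceEmbedding hI').toContinuousLinearMap.hasSum
        (hasSum_fourierCoeffOn_mul_fourier hpi hG hGper θ)
  have hγ := summable_norm_fourierCoeffOn hpi hG hGper
  have hsum := hasSum_fourierR_mul_of_hasSum hI' hf.continuous hγ hseries n
  simp only [← hcoeff] at hsum
  refine ⟨.of_nonneg_of_le (fun _ ↦ norm_nonneg _) (fun m ↦ ?_)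
    ((hγ.comp_injective (sub_right_injective (b := n))).mul_left
      (1 / (2 * π) * ∫ θ in -π..π, ‖f θ‖)), hsum.tsum_eq.symm⟩
  rw [norm_mul, hcoeff, LinearIsometry.norm_map]
  exact mul_le_mul_of_nonneg_right (norm_fourierR_le hI' f m) (norm_nonneg _)

/-- If `f, g : ℝ → ℍ` are continuously differentiable and `2π`-periodic and
`g` takes values in the slice `ℂ_I = ℝ + ℝI`, then the right Fourier coefficients satisfy the
convolution formula `F_{R,I}(fg)(n) = Σ_{m ∈ ℤ} F_{R,I}(f)(m) F_{R,I}(g)(n − m)`, the series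
converging absolutely. -/
theorem fourierR_mul (I : ℍ) (hI : I ^ 2 = -1)
    (f g : ℝ → ℍ) (hf : ContDiff ℝ 1 f) (hg : ContDiff ℝ 1 g)
    (hfp : Function.Periodic f (2 * Real.pi)) (hgp : Function.Periodic g (2 * Real.pi))
    (hgI : ∀ θ : ℝ, ∃ a b : ℝ, g θ = ((a : ℝ) : ℍ) + b • I) (n : ℤ) :
    Summable (fun m : ℤ => ‖fourierR I f m * fourierR I g (n - m)‖) ∧
    fourierR I (fun θ => f θ * g θ) n = ∑' m : ℤ, fourierR I f m * fourierR I g (n - m) :=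
  fourierR_mul_general I hI f g hf hg hgp hgI n
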